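/- Let Y be a Poisson random variable with mean μ > 0, let c > 0, and define the Huber function ψ_c(r) = r if |r| ≤ c and ψ_c(r) = c·sign(r) otherwise. Let r = (Y − μ)/√μ be the Pearson residual. Then E[ψ_c(r)] = c·(P(Y ≥ j₂ + 1) − P(Y ≤ j₁)) + √μ·(P(Y = j₁) − P(Y = j₂)), where j₁ = ⌊μ − c√μ⌋ and j₂ = ⌊μ + c√μ⌋. -/
import Mathlib

open ProbabilityTheory Real

/-- Huber function with tuning constant `c`. -/
noncomputable def huber (c r : ℝ) : ℝ := if |r| ≤ c then r else c * Real.sign r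

lemma huber_of_le_neg {c r : ℝ} (hc : 0 < c) (h : r ≤ -c) : huber c r = -c := by
  unfold huber
  split_ifs with h'
  · have := abs_le.mp h'
    linarith [this.1]
  · rw [Real.sign_of_neg (by linarith : r < 0)]; ring

lemma huber_of_ge {c r : ℝ} (hc : 0 < c) (h : c ≤ r) : huber c r = c := by
  unfold huber
  split_ifs with h'
  · have := abs_le.mp h'
    linarith [this.2]
  · rw [Real.sign_of_pos (by linarith : 0 < r)]; ring

lemma huber_of_abs_le {c r : ℝ} (h : |r| ≤ c) : huber c r = r := if_pos h

/-- telescoping auxiliary function -/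
noncomputable def poissonG (μ : NNReal) : ℕ → ℝ
  | 0 => 0
  | k + 1 => μ * poissonPMFReal μ k

lemma poisson_rec (μ : NNReal) (k : ℕ) :
    ((k : ℝ) + 1) * poissonPMFReal μ (k + 1) = μ * poissonPMFReal μ k := by
  unfold poissonPMFReal
  rw [Nat.factorial_succ]
  push_cast
  have h1 : ((k : ℝ) + 1) ≠ 0 := by positivity
  have h2 : (k.factorial : ℝ) ≠ 0 := by positivity
  field_simp
  ring

lemma poissonG_sub (μ : NNReal) (k : ℕ) :
    poissonPMFReal μ k * ((k : ℝ) - μ) = poissonG μ k - poissonG μ (k + 1) := by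
  cases k with
  | zero => simp [poissonG]; ring
  | succ n =>
      have := poisson_rec μ n
      simp only [poissonG]
      push_cast
      nlinarith [this]

/-- Expectation of the Huber function of the Pearson residual of a Poisson
random variable with mean `μ > 0`. -/
theorem expectation_huber_pearson_poisson (μ : NNReal) (hμ : (0:ℝ) < μ) (c : ℝ) (hc : 0 < c)
    (j₁ j₂ : ℤ)
    (hj₁ : j₁ = ⌊(μ : ℝ) - c * Real.sqrt μ⌋)
    (hj₂ : j₂ = ⌊(μ : ℝ) + c * Real.sqrt μ⌋) :
    ∑' k : ℕ, poissonPMFReal μ k * huber c ((k - μ) / Real.sqrt μ)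
      = c * ((∑' k : ℕ, if j₂ + 1 ≤ (k : ℤ) then poissonPMFReal μ k else 0)
              - ∑' k : ℕ, if (k : ℤ) ≤ j₁ then poissonPMFReal μ k else 0)
        + Real.sqrt μ *
            ((if 0 ≤ j₁ then poissonPMFReal μ j₁.toNat else 0)
              - (if 0 ≤ j₂ then poissonPMFReal μ j₂.toNat else 0)) := by
  set p := poissonPMFReal μ with hp_def
  have hsq : (0:ℝ) < Real.sqrt μ := Real.sqrt_pos.mpr hμ
  have hsqsq : Real.sqrt μ * Real.sqrt μ = (μ : ℝ) := Real.mul_self_sqrt μ.2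
  have hpnn : ∀ k, 0 ≤ p k := fun k => poissonPMFReal_nonneg
  have hp : Summable p := (poissonPMFRealSum μ).summable
  have hj₂0 : 0 ≤ j₂ := by
    rw [hj₂]
    exact Int.floor_nonneg.mpr (by positivity)
  have hj₁₂ : j₁ ≤ j₂ := by
    rw [hj₁, hj₂]
    exact Int.floor_le_floor (by nlinarith)
  set a := (j₁ + 1).toNat with ha_def
  set b := j₂.toNat with hb_def
  have hb1 : (b : ℤ) = j₂ := Int.toNat_of_nonneg hj₂0
  have hab : a ≤ b + 1 := by omega
  -- summabilities
  have hS₁ : Summable (fun k : ℕ => if (k:ℤ) ≤ j₁ then p k else 0) := by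
    apply Summable.of_nonneg_of_le (fun k => ?_) (fun k => ?_) hp
    · split <;> simp [hpnn]
    · split <;> simp [hpnn]
  have hS₂ : Summable (fun k : ℕ => if j₂ + 1 ≤ (k:ℤ) then p k else 0) := by
    apply Summable.of_nonneg_of_le (fun k => ?_) (fun k => ?_) hp
    · split <;> simp [hpnn]
    · split <;> simp [hpnn]
  have hS₃ : Summable (fun k : ℕ => if k ∈ Finset.Icc a b
      then (poissonG μ k - poissonG μ (k+1)) / Real.sqrt μ else 0) :=
    summable_of_ne_finset_zero (s := Finset.Icc a b) (fun k hk => if_neg hk)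
  -- pointwise decomposition
  have key : ∀ k : ℕ, p k * huber c ((k - μ) / Real.sqrt μ)
      = (-c) * (if (k:ℤ) ≤ j₁ then p k else 0)
        + c * (if j₂ + 1 ≤ (k:ℤ) then p k else 0)
        + (if k ∈ Finset.Icc a b
            then (poissonG μ k - poissonG μ (k+1)) / Real.sqrt μ else 0) := by
    intro k
    rcases le_or_gt (k:ℤ) j₁ with hk1 | hk1
    · have hk2 : ¬ (j₂ + 1 ≤ (k:ℤ)) := by omega
      have hkmem : ¬ (k ∈ Finset.Icc a b) := by
        simp only [Finset.mem_Icc]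
        intro ⟨h1, _⟩
        omega
      have hkr : ((k:ℝ) - μ) / Real.sqrt μ ≤ -c := by
        rw [div_le_iff₀ hsq]
        have h1 : ((k:ℝ)) ≤ (j₁ : ℝ) := by exact_mod_cast hk1
        have h2 : (j₁ : ℝ) ≤ (μ : ℝ) - c * Real.sqrt μ := hj₁ ▸ Int.floor_le _
        linarith
      rw [huber_of_le_neg hc hkr, if_pos hk1, if_neg hk2, if_neg hkmem]
      ring
    rcases le_or_gt (j₂ + 1) (k:ℤ) with hk2 | hk2
    · have hkmem : ¬ (k ∈ Finset.Icc a b) := by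
        simp only [Finset.mem_Icc]
        intro ⟨_, h2⟩
        omega
      have hkr : c ≤ ((k:ℝ) - μ) / Real.sqrt μ := by
        rw [le_div_iff₀ hsq]
        have h1 : ((j₂ : ℝ) + 1) ≤ (k : ℝ) := by exact_mod_cast hk2
        have h2 : (μ : ℝ) + c * Real.sqrt μ < (j₂ : ℝ) + 1 := hj₂ ▸ Int.lt_floor_add_one _
        linarith
      rw [huber_of_ge hc hkr, if_neg (by omega : ¬ (k:ℤ) ≤ j₁), if_pos hk2, if_neg hkmem]
      ring
    · -- middle region
      have hkmem : k ∈ Finset.Icc a b := by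
        simp only [Finset.mem_Icc]
        omega
      have hr1 : -c ≤ ((k:ℝ) - μ) / Real.sqrt μ := by
        rw [le_div_iff₀ hsq]
        have h1 : (j₁ : ℝ) + 1 ≤ (k : ℝ) := by exact_mod_cast hk1
        have h2 : (μ : ℝ) - c * Real.sqrt μ < (j₁ : ℝ) + 1 := hj₁ ▸ Int.lt_floor_add_one _
        linarith
      have hr2 : ((k:ℝ) - μ) / Real.sqrt μ ≤ c := by
        rw [div_le_iff₀ hsq]
        have h1 : ((k:ℝ)) ≤ (j₂ : ℝ) := by exact_mod_cast (by omega : (k:ℤ) ≤ j₂)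
        have h2 : (j₂ : ℝ) ≤ (μ : ℝ) + c * Real.sqrt μ := hj₂ ▸ Int.floor_le _
        linarith
      rw [huber_of_abs_le (abs_le.mpr ⟨hr1, hr2⟩),
        if_neg (by omega : ¬ (k:ℤ) ≤ j₁), if_neg (by omega : ¬ j₂ + 1 ≤ (k:ℤ)),
        if_pos hkmem, ← poissonG_sub, ← hp_def]
      rw [mul_div_assoc]
      ring
  calc ∑' k : ℕ, p k * huber c ((k - μ) / Real.sqrt μ)
      = ∑' k : ℕ, ((-c) * (if (k:ℤ) ≤ j₁ then p k else 0)
        + c * (if j₂ + 1 ≤ (k:ℤ) then p k else 0)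
        + (if k ∈ Finset.Icc a b
            then (poissonG μ k - poissonG μ (k+1)) / Real.sqrt μ else 0)) := tsum_congr key
    _ = (-c) * (∑' k : ℕ, if (k:ℤ) ≤ j₁ then p k else 0)
        + c * (∑' k : ℕ, if j₂ + 1 ≤ (k:ℤ) then p k else 0)
        + ∑' k : ℕ, (if k ∈ Finset.Icc a b
            then (poissonG μ k - poissonG μ (k+1)) / Real.sqrt μ else 0) := by
        rw [Summable.tsum_add ((hS₁.mul_left _).add (hS₂.mul_left _)) hS₃,
          Summable.tsum_add (hS₁.mul_left _) (hS₂.mul_left _), tsum_mul_left, tsum_mul_left]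
    _ = (-c) * (∑' k : ℕ, if (k:ℤ) ≤ j₁ then p k else 0)
        + c * (∑' k : ℕ, if j₂ + 1 ≤ (k:ℤ) then p k else 0)
        + (poissonG μ a - poissonG μ (b+1)) / Real.sqrt μ := by
        congr 1
        rw [tsum_eq_sum (s := Finset.Icc a b) (fun k hk => if_neg hk)]
        rw [Finset.sum_ite_of_true (fun k hk => hk), ← Finset.sum_div]
        congr 1
        rw [← Finset.Ico_add_one_right_eq_Icc, Finset.sum_Ico_eq_sub _ hab,
          Finset.sum_range_sub' (poissonG μ), Finset.sum_range_sub' (poissonG μ)]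
        ring
    _ = _ := by
        have hGb : poissonG μ (b + 1) = (μ:ℝ) * p j₂.toNat := rfl
        have hGa : poissonG μ a
            = (μ:ℝ) * (if 0 ≤ j₁ then p j₁.toNat else 0) := by
          by_cases h : 0 ≤ j₁
          · have : a = j₁.toNat + 1 := by omega
            rw [this, if_pos h]
            rfl
          · have : a = 0 := by omega
            rw [this, if_neg h]
            simp [poissonG]
        rw [hGa, hGb, if_pos hj₂0]
        set T₁ := (if 0 ≤ j₁ then p j₁.toNat else 0) with hT₁
        have key2 : ((μ:ℝ) * T₁ - (μ:ℝ) * p j₂.toNat) / Real.sqrt μ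
            = Real.sqrt μ * (T₁ - p j₂.toNat) := by
          rw [div_eq_iff hsq.ne']
          linear_combination (p j₂.toNat - T₁) * hsqsq
        rw [key2]
        ring
  done
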